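/- arXiv:1505.04008 — 3 statements merged into one kernel-verified Lean document; each statement's English description precedes it below -/
import Mathlib

section
/- Let X be an n×p real matrix of full column rank, A₀ a (p−q)×p matrix of full row rank, and A¹ a p×q matrix whose columns span the null space of A₀. Define H_F = X(XᵀX)⁻¹Xᵀ, Z₁ = XA¹, H_M = Z₁(Z₁ᵀZ₁)⁻¹Z₁ᵀ, and H̄_M = X(XᵀX)⁻¹A₀ᵀ(A₀(XᵀX)⁻¹A₀ᵀ)⁻¹A₀(XᵀX)⁻¹Xᵀ. Then H̄_M = H_F − H_M. -/
open Matrix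

namespace Matrix

variable {K : Type*} [Field K] {m k l : Type*}

theorem mulVec_injective_of_rank_eq_card [Fintype k] {A : Matrix m k K}
    (h : A.rank = Fintype.card k) :
    Function.Injective A.mulVec :=
  mulVec_injective_iff.mpr <| linearIndependent_iff_card_eq_finrank_span.mpr <| by
    rw [← h, rank_eq_finrank_span_cols]; rfl

theorem vecMul_injective_of_rank_eq_card [Fintype m] [Fintype k] {A : Matrix m k K}
    (h : A.rank = Fintype.card m) :
    Function.Injective A.vecMul :=
  vecMul_injective_iff.mpr <| linearIndependent_iff_card_eq_finrank_span.mpr <| by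
    rw [← h, rank_eq_finrank_span_row]; rfl

variable [Fintype m] [Fintype k] [Fintype l] [DecidableEq m] [DecidableEq k] [DecidableEq l]

/-- The block row `[G⁻¹ A₁ᵀ; W⁻¹ A₀ S⁻¹]` is a left inverse of the block column `[S A₁ | A₀ᵀ]`;
the dimension count makes both square, so it is also a right inverse, and expanding that product
splits `S⁻¹` as `A₁ G⁻¹ A₁ᵀ + S⁻¹ A₀ᵀ W⁻¹ A₀ S⁻¹`. -/
theorem inv_mul_transpose_mul_inv_eq_inv_sub
    (hcard : Fintype.card k + Fintype.card l = Fintype.card m)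
    {S : Matrix m m K} (hS : IsUnit S.det) (A₀ : Matrix l m K) (A₁ : Matrix m k K)
    (hW : IsUnit (A₀ * S⁻¹ * A₀ᵀ).det) (hG : IsUnit (A₁ᵀ * S * A₁).det) (hA : A₀ * A₁ = 0) :
    S⁻¹ * A₀ᵀ * (A₀ * S⁻¹ * A₀ᵀ)⁻¹ * A₀ * S⁻¹ = S⁻¹ - A₁ * (A₁ᵀ * S * A₁)⁻¹ * A₁ᵀ := by
  set G := A₁ᵀ * S * A₁
  set W := A₀ * S⁻¹ * A₀ᵀ
  have hAt : A₁ᵀ * A₀ᵀ = 0 := by rw [← transpose_mul, hA, transpose_zero]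
  have hRT : fromRows (G⁻¹ * A₁ᵀ) (W⁻¹ * A₀ * S⁻¹) * fromCols (S * A₁) A₀ᵀ = 1 := by
    rw [fromRows_mul_fromCols, ← fromBlocks_one]
    congr 1
    · simp only [G, Matrix.mul_assoc] at hG ⊢
      exact nonsing_inv_mul _ hG
    · rw [Matrix.mul_assoc, hAt, Matrix.mul_zero]
    · rw [Matrix.mul_assoc, Matrix.mul_assoc, nonsing_inv_mul_cancel_left _ _ hS, hA,
        Matrix.mul_zero]
    · simp only [W, Matrix.mul_assoc] at hW ⊢
      exact nonsing_inv_mul _ hW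
  have e : m ≃ k ⊕ l := Fintype.equivOfCardEq (by rw [Fintype.card_sum, hcard])
  have hTR := (fromCols_mul_fromRows_eq_one_comm e _ _ _ _).mpr hRT
  rw [fromCols_mul_fromRows] at hTR
  rw [eq_sub_iff_add_eq']
  calc _ = S⁻¹ * (S * A₁ * (G⁻¹ * A₁ᵀ) + A₀ᵀ * (W⁻¹ * A₀ * S⁻¹)) := by
        simp only [Matrix.mul_add, Matrix.mul_assoc, nonsing_inv_mul_cancel_left _ _ hS]
    _ = S⁻¹ := by rw [hTR, Matrix.mul_one]

end Matrix

/-- H̄_M = H_F − H_M. -/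
theorem stmt3 (n p q r : ℕ) (hpq : q + r = p)
    (X : Matrix (Fin n) (Fin p) ℝ) (hX : X.rank = p)
    (A0 : Matrix (Fin r) (Fin p) ℝ) (hA0 : A0.rank = r)
    (A1 : Matrix (Fin p) (Fin q) ℝ) (hA1 : A1.rank = q)
    (hnull : A0 * A1 = 0) :
    X * (Xᵀ * X)⁻¹ * A0ᵀ * (A0 * (Xᵀ * X)⁻¹ * A0ᵀ)⁻¹ * A0 * (Xᵀ * X)⁻¹ * Xᵀ =
      X * (Xᵀ * X)⁻¹ * Xᵀ - (X * A1) * (((X * A1)ᵀ * (X * A1))⁻¹) * (X * A1)ᵀ := by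
  have hX_inj := mulVec_injective_of_rank_eq_card (hX.trans (Fintype.card_fin p).symm)
  have hA0_inj := vecMul_injective_of_rank_eq_card (hA0.trans (Fintype.card_fin r).symm)
  have hA1_inj := mulVec_injective_of_rank_eq_card (hA1.trans (Fintype.card_fin q).symm)
  have hXA1_inj : Function.Injective (X * A1).mulVec := by
    rw [show (X * A1).mulVec = X.mulVec ∘ A1.mulVec from
      funext fun v => (mulVec_mulVec v X A1).symm]
    exact hX_inj.comp hA1_inj
  have hS : (Xᵀ * X).PosDef := by
    simpa [conjTranspose_eq_transpose_of_trivial] using PosDef.conjTranspose_mul_self X hX_inj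
  have hW : (A0 * (Xᵀ * X)⁻¹ * A0ᵀ).PosDef := by
    simpa [conjTranspose_eq_transpose_of_trivial] using hS.inv.mul_mul_conjTranspose_same hA0_inj
  have hGeq : (X * A1)ᵀ * (X * A1) = A1ᵀ * (Xᵀ * X) * A1 := by
    simp only [transpose_mul, Matrix.mul_assoc]
  have hG : (A1ᵀ * (Xᵀ * X) * A1).PosDef := by
    rw [← hGeq]
    simpa [conjTranspose_eq_transpose_of_trivial] using PosDef.conjTranspose_mul_self _ hXA1_inj
  have hsplit := inv_mul_transpose_mul_inv_eq_inv_sub (by simpa using hpq)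
    hS.det_pos.ne'.isUnit A0 A1 hW.det_pos.ne'.isUnit hG.det_pos.ne'.isUnit hnull
  calc _ = X * ((Xᵀ * X)⁻¹ * A0ᵀ * (A0 * (Xᵀ * X)⁻¹ * A0ᵀ)⁻¹ * A0 * (Xᵀ * X)⁻¹) * Xᵀ := by
        simp only [Matrix.mul_assoc]
    _ = _ := by
      rw [hsplit, hGeq, transpose_mul]
      simp only [Matrix.mul_sub, Matrix.sub_mul, Matrix.mul_assoc]
end

section
/- Let X = QR be the QR decomposition of an n×p full-column-rank matrix X (Q n×p orthogonal, R p×p upper triangular invertible), and let z = Qᵀy. Consider the constrained least squares problem minimizing ‖y − Xβ‖² subject to A₀β = 0, where A₀ is a (p−q)×p matrix of full row rank. Let S = R⁻ᵀA₀ᵀ = WU be the QR decomposition of S (W p×(p−q) orthogonal, U upper triangular invertible). Then the constrained residual sum of squares equals ‖y‖² − ‖z‖² + ‖Wᵀz‖². -/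
/-!
Write `z = Qᵀy`. Since `Q` has orthonormal columns, Pythagoras splits the residual as
`‖y - Xβ‖² = (‖y‖² - ‖z‖²) + ‖z - Rβ‖²`. Substituting `A₀ = UᵀWᵀR` shows that `β` is feasible exactly
when `γ = Rβ` lies in `ker Wᵀ`, and the distance from `z` to `ker Wᵀ` is the length `‖Wᵀz‖` of its
projection `WWᵀz` onto the column space of `W`; the minimiser is `Rβ̂ = z - WWᵀz`.
-/

open Matrix

section OrthonormalColumns

variable {m k : Type*} [Fintype m] [Fintype k] [DecidableEq k] {W : Matrix m k ℝ}

theorem transpose_mulVec_sub_mulVec_transpose_mulVec (hW : Wᵀ * W = 1) (z : m → ℝ) :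
    Wᵀ *ᵥ (z - W *ᵥ (Wᵀ *ᵥ z)) = 0 := by
  rw [mulVec_sub, mulVec_mulVec, hW, one_mulVec, sub_self]

theorem dotProduct_self_mulVec_add_of_transpose_mulVec_eq_zero (hW : Wᵀ * W = 1) {d : m → ℝ}
    (hd : Wᵀ *ᵥ d = 0) (u : k → ℝ) :
    (W *ᵥ u + d) ⬝ᵥ (W *ᵥ u + d) = u ⬝ᵥ u + d ⬝ᵥ d := by
  have hWu : W *ᵥ u ⬝ᵥ W *ᵥ u = u ⬝ᵥ u := by
    rw [dotProduct_mulVec, ← mulVec_transpose, mulVec_mulVec, hW, one_mulVec]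
  have hdW : d ⬝ᵥ W *ᵥ u = 0 := by
    rw [dotProduct_mulVec, ← mulVec_transpose, hd, zero_dotProduct]
  simp only [add_dotProduct, dotProduct_add, hWu, hdW, dotProduct_comm (W *ᵥ u) d]
  ring

theorem dotProduct_self_sub_mulVec (hW : Wᵀ * W = 1) (y : m → ℝ) (v : k → ℝ) :
    (y - W *ᵥ v) ⬝ᵥ (y - W *ᵥ v)
      = y ⬝ᵥ y - (Wᵀ *ᵥ y) ⬝ᵥ (Wᵀ *ᵥ y) + (Wᵀ *ᵥ y - v) ⬝ᵥ (Wᵀ *ᵥ y - v) := by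
  set r := y - W *ᵥ (Wᵀ *ᵥ y) with hr_def
  have hr : Wᵀ *ᵥ r = 0 := transpose_mulVec_sub_mulVec_transpose_mulVec hW y
  have hy := dotProduct_self_mulVec_add_of_transpose_mulVec_eq_zero hW hr (Wᵀ *ᵥ y)
  have hyv := dotProduct_self_mulVec_add_of_transpose_mulVec_eq_zero hW hr (Wᵀ *ᵥ y - v)
  rw [show W *ᵥ (Wᵀ *ᵥ y) + r = y by rw [hr_def]; abel] at hy
  rw [show W *ᵥ (Wᵀ *ᵥ y - v) + r = y - W *ᵥ v by rw [hr_def, mulVec_sub]; abel] at hyv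
  linarith

theorem isLeast_dotProduct_self_sub_of_transpose_mulVec_eq_zero (hW : Wᵀ * W = 1) (z : m → ℝ) :
    IsLeast {s | ∃ γ, Wᵀ *ᵥ γ = 0 ∧ s = (z - γ) ⬝ᵥ (z - γ)} ((Wᵀ *ᵥ z) ⬝ᵥ (Wᵀ *ᵥ z)) := by
  set c := z - W *ᵥ (Wᵀ *ᵥ z) with hc_def
  have hc : Wᵀ *ᵥ c = 0 := transpose_mulVec_sub_mulVec_transpose_mulVec hW z
  have split : ∀ γ, Wᵀ *ᵥ γ = 0 →
      (z - γ) ⬝ᵥ (z - γ) = (Wᵀ *ᵥ z) ⬝ᵥ (Wᵀ *ᵥ z) + (c - γ) ⬝ᵥ (c - γ) := fun γ hγ => by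
    have hcγ : Wᵀ *ᵥ (c - γ) = 0 := by rw [mulVec_sub, hc, hγ, sub_zero]
    rw [← dotProduct_self_mulVec_add_of_transpose_mulVec_eq_zero hW hcγ]
    congr 1 <;> rw [hc_def] <;> abel
  refine ⟨⟨c, hc, ?_⟩, ?_⟩
  · rw [split c hc, sub_self, zero_dotProduct, add_zero]
  · rintro _ ⟨γ, hγ, rfl⟩
    rw [split γ hγ]
    exact le_add_of_nonneg_right (Finset.sum_nonneg fun i _ => mul_self_nonneg _)

end OrthonormalColumns

section Constraint

variable {k l : Type*} [Fintype k] [DecidableEq k] [Fintype l]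
  {A : Matrix l k ℝ} {R : Matrix k k ℝ} {W : Matrix k l ℝ} {U : Matrix l l ℝ}

theorem eq_transpose_mul_transpose_mul_of_inv_transpose_mul_transpose_eq (hR : IsUnit R)
    (hS : (R⁻¹)ᵀ * Aᵀ = W * U) : A = Uᵀ * Wᵀ * R := by
  have hAt : Aᵀ = Rᵀ * (W * U) := by
    rw [← hS, transpose_nonsing_inv,
      mul_nonsing_inv_cancel_left _ _ ((isUnit_iff_isUnit_det _).mp ((isUnit_transpose R).mpr hR))]
  rw [← transpose_transpose A, hAt, transpose_mul, transpose_mul, transpose_transpose, Matrix.mul_assoc]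

theorem mulVec_eq_zero_iff_transpose_mulVec_mulVec_eq_zero [DecidableEq l] (hR : IsUnit R) (hU : IsUnit U)
    (hS : (R⁻¹)ᵀ * Aᵀ = W * U) (β : k → ℝ) :
    A *ᵥ β = 0 ↔ Wᵀ *ᵥ (R *ᵥ β) = 0 := by
  rw [eq_transpose_mul_transpose_mul_of_inv_transpose_mul_transpose_eq hR hS, ← mulVec_mulVec,
    ← mulVec_mulVec]
  exact (mulVec_injective_iff_isUnit.mpr ((isUnit_transpose U).mpr hU)).eq_iff' (mulVec_zero _)

end Constraint

theorem stmt7_general (n p q : ℕ)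
    (X Q : Matrix (Fin n) (Fin p) ℝ)
    (R : Matrix (Fin p) (Fin p) ℝ)
    (hQR : X = Q * R) (hQ : Qᵀ * Q = 1)
    (hRinv : IsUnit R)
    (A0 : Matrix (Fin (p - q)) (Fin p) ℝ)
    (y : Fin n → ℝ)
    (W : Matrix (Fin p) (Fin (p - q)) ℝ) (U : Matrix (Fin (p - q)) (Fin (p - q)) ℝ)
    (hW : Wᵀ * W = 1) (hUinv : IsUnit U)
    (hS : (R⁻¹)ᵀ * A0ᵀ = W * U) :
    IsLeast {s : ℝ | ∃ β : Fin p → ℝ, A0.mulVec β = 0 ∧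
        s = (y - X.mulVec β) ⬝ᵥ (y - X.mulVec β)}
      (y ⬝ᵥ y - (Qᵀ.mulVec y) ⬝ᵥ (Qᵀ.mulVec y)
        + (Wᵀ.mulVec (Qᵀ.mulVec y)) ⬝ᵥ (Wᵀ.mulVec (Qᵀ.mulVec y))) := by
  have feasible := mulVec_eq_zero_iff_transpose_mulVec_mulVec_eq_zero hRinv hUinv hS
  have rss : ∀ β, (y - X *ᵥ β) ⬝ᵥ (y - X *ᵥ β) = y ⬝ᵥ y - (Qᵀ *ᵥ y) ⬝ᵥ (Qᵀ *ᵥ y)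
      + (Qᵀ *ᵥ y - R *ᵥ β) ⬝ᵥ (Qᵀ *ᵥ y - R *ᵥ β) := fun β => by
    rw [hQR, ← mulVec_mulVec, dotProduct_self_sub_mulVec hQ]
  obtain ⟨⟨γ, hγ, hmin⟩, hlow⟩ :=
    isLeast_dotProduct_self_sub_of_transpose_mulVec_eq_zero hW (Qᵀ *ᵥ y)
  have hRγ : R *ᵥ (R⁻¹ *ᵥ γ) = γ := by
    rw [mulVec_mulVec, mul_nonsing_inv _ ((isUnit_iff_isUnit_det R).mp hRinv), one_mulVec]
  refine ⟨⟨R⁻¹ *ᵥ γ, (feasible _).mpr (by rwa [hRγ]), ?_⟩, ?_⟩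
  · rw [rss, hRγ, hmin]
  · rintro _ ⟨β, hβ, rfl⟩
    rw [rss]
    have := hlow ⟨R *ᵥ β, (feasible β).mp hβ, rfl⟩
    linarith

/-- constrained RSS equals ‖y‖² − ‖z‖² + ‖Wᵀz‖². -/
theorem stmt7 (n p q : ℕ) (hq : q ≤ p)
    (X Q : Matrix (Fin n) (Fin p) ℝ)
    (R : Matrix (Fin p) (Fin p) ℝ)
    (hQR : X = Q * R) (hXrank : X.rank = p) (hQ : Qᵀ * Q = 1)
    (hR : ∀ i j : Fin p, j < i → R i j = 0) (hRinv : IsUnit R)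
    (A0 : Matrix (Fin (p - q)) (Fin p) ℝ) (hA0 : A0.rank = p - q)
    (y : Fin n → ℝ)
    (W : Matrix (Fin p) (Fin (p - q)) ℝ) (U : Matrix (Fin (p - q)) (Fin (p - q)) ℝ)
    (hW : Wᵀ * W = 1) (hU : ∀ i j : Fin (p - q), j < i → U i j = 0) (hUinv : IsUnit U)
    (hS : (R⁻¹)ᵀ * A0ᵀ = W * U) :
    IsLeast {s : ℝ | ∃ β : Fin p → ℝ, A0.mulVec β = 0 ∧
        s = (y - X.mulVec β) ⬝ᵥ (y - X.mulVec β)}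
      (y ⬝ᵥ y - (Qᵀ.mulVec y) ⬝ᵥ (Qᵀ.mulVec y)
        + (Wᵀ.mulVec (Qᵀ.mulVec y)) ⬝ᵥ (Wᵀ.mulVec (Qᵀ.mulVec y))) :=
  stmt7_general n p q X Q R hQR hQ hRinv A0 y W U hW hUinv hS
end

section
/- Consider agglomerative hierarchical clustering on {1,…,p} with a symmetric dissimilarity matrix D = [d_{ij}], using a linkage criterion of the form d(C₁∪C₂, C₃) = b·min(d(C₁,C₃), d(C₂,C₃)) + (1−b)·max(d(C₁,C₃), d(C₂,C₃)) for a fixed b ∈ [0,1]. Suppose there exists a true partition P* = {C*₁,…,C*_T} such that d^true := max over clusters C*_l and i,j ∈ C*_l of d_{ij} is strictly less than d^false := min over distinct clusters C*_l, C*_m and i ∈ C*_l, j ∈ C*_m of d_{ij}. Then every merge whose result is contained in some true cluster occurs at cutting height ≤ d^true, every merge that combines elements from different true clusters occurs at cutting height ≥ d^false, and after exactly p − T merges the current partition equals P*. -/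
/-!
While some two current clusters lie in a common true cluster, the minimal linkage is at most
`dtrue < dfalse`, so the merged pair lies in a common true cluster; once no such pair is left, the
current partition is coarser than the true one. The linkage of a merged cluster is a convex
combination of the linkages of its parts, hence the bounds `≤ dtrue` inside true clusters and
`≥ dfalse` across them persist. So the clusterings stay comparable with the true partition in the
refinement order, and a comparable partition with as many blocks as the true one is the true one.
-/

open Finset

namespace AgglomerativeClustering

theorem min_le_linkage {b : ℝ} (hb0 : 0 ≤ b) (hb1 : b ≤ 1) (x y : ℝ) :
    min x y ≤ b * min x y + (1 - b) * max x y := by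
  simpa [min_eq_left min_le_max] using
    Convex.min_le_combo (min x y) (max x y) hb0 (sub_nonneg.2 hb1) (add_sub_cancel b 1)

theorem linkage_le_max {b : ℝ} (hb0 : 0 ≤ b) (hb1 : b ≤ 1) (x y : ℝ) :
    b * min x y + (1 - b) * max x y ≤ max x y := by
  simpa [max_eq_right min_le_max] using
    Convex.combo_le_max (min x y) (max x y) hb0 (sub_nonneg.2 hb1) (add_sub_cancel b 1)

variable {α : Type*} [DecidableEq α]

structure IsPartition (Q : Finset (Finset α)) : Prop where
  nonempty : ∀ C ∈ Q, C.Nonempty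
  disjoint : ∀ C ∈ Q, ∀ C' ∈ Q, C ≠ C' → Disjoint C C'
  cover : ∀ i, ∃ C ∈ Q, i ∈ C

def Refines (Q R : Finset (Finset α)) : Prop :=
  ∀ C ∈ Q, ∃ E ∈ R, C ⊆ E

def SameBlock (R : Finset (Finset α)) (C C' : Finset α) : Prop :=
  ∃ E ∈ R, C ∪ C' ⊆ E

def mergeClusters (Q : Finset (Finset α)) (A B : Finset α) : Finset (Finset α) :=
  insert (A ∪ B) ((Q.erase A).erase B)

variable {Q R : Finset (Finset α)} {A B C : Finset α}

theorem IsPartition.eq_of_mem (hR : IsPartition R) {E E' : Finset α} (hE : E ∈ R) (hE' : E' ∈ R)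
    {x : α} (hxE : x ∈ E) (hxE' : x ∈ E') : E = E' := by
  by_contra hne
  exact disjoint_left.1 (hR.disjoint E hE E' hE' hne) hxE hxE'

theorem sameBlock_comm : SameBlock R A B ↔ SameBlock R B A := by
  simp only [SameBlock, union_comm]

theorem SameBlock.union (hR : IsPartition R) (hAB : SameBlock R A B) (hAC : SameBlock R A C)
    (hA : A.Nonempty) : SameBlock R (A ∪ B) C := by
  obtain ⟨E, hE, hABE⟩ := hAB
  obtain ⟨E', hE', hACE'⟩ := hAC
  obtain ⟨x, hx⟩ := hA
  have hEE' : E = E' :=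
    hR.eq_of_mem hE hE' (hABE (mem_union_left _ hx)) (hACE' (mem_union_left _ hx))
  subst hEE'
  exact ⟨E, hE, union_subset hABE (subset_union_right.trans hACE')⟩

theorem mem_mergeClusters : C ∈ mergeClusters Q A B ↔ C = A ∪ B ∨ C ∈ Q ∧ C ≠ A ∧ C ≠ B := by
  simp only [mergeClusters, mem_insert, mem_erase]
  tauto

theorem IsPartition.merge (hQ : IsPartition Q) (hA : A ∈ Q) (hB : B ∈ Q) (hAB : A ≠ B) :
    IsPartition (mergeClusters Q A B) where
  nonempty C hC := by
    rcases mem_mergeClusters.1 hC with rfl | ⟨hCQ, -⟩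
    · exact (hQ.nonempty A hA).mono subset_union_left
    · exact hQ.nonempty C hCQ
  disjoint C hC C' hC' hne := by
    rcases mem_mergeClusters.1 hC with rfl | ⟨hCQ, hCA, hCB⟩ <;>
      rcases mem_mergeClusters.1 hC' with rfl | ⟨hC'Q, hC'A, hC'B⟩
    · exact absurd rfl hne
    · exact disjoint_union_left.2
        ⟨hQ.disjoint A hA C' hC'Q hC'A.symm, hQ.disjoint B hB C' hC'Q hC'B.symm⟩
    · exact disjoint_union_right.2 ⟨hQ.disjoint C hCQ A hA hCA, hQ.disjoint C hCQ B hB hCB⟩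
    · exact hQ.disjoint C hCQ C' hC'Q hne
  cover i := by
    obtain ⟨C, hC, hiC⟩ := hQ.cover i
    by_cases hCAB : C = A ∨ C = B
    · refine ⟨A ∪ B, mem_mergeClusters.2 (.inl rfl), ?_⟩
      rcases hCAB with rfl | rfl
      exacts [mem_union_left _ hiC, mem_union_right _ hiC]
    · push Not at hCAB
      exact ⟨C, mem_mergeClusters.2 (.inr ⟨hC, hCAB⟩), hiC⟩

theorem IsPartition.card_merge (hQ : IsPartition Q) (hA : A ∈ Q) (hB : B ∈ Q) (hAB : A ≠ B) :
    #(mergeClusters Q A B) + 1 = #Q := by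
  have hU : A ∪ B ∉ (Q.erase A).erase B := by
    simp only [mem_erase]
    rintro ⟨-, hUA, hUQ⟩
    obtain ⟨x, hx⟩ := hQ.nonempty A hA
    exact disjoint_left.1 (hQ.disjoint _ hUQ A hA hUA) (mem_union_left _ hx) hx
  have htwo : 1 < #Q := one_lt_card.2 ⟨A, hA, B, hB, hAB⟩
  rw [mergeClusters, card_insert_of_notMem hU, card_erase_of_mem (mem_erase.2 ⟨hAB.symm, hB⟩),
    card_erase_of_mem hA]
  omega

theorem Refines.merge (hQR : Refines Q R) (hAB : SameBlock R A B) :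
    Refines (mergeClusters Q A B) R := by
  intro C hC
  rcases mem_mergeClusters.1 hC with rfl | ⟨hCQ, -⟩
  exacts [hAB, hQR C hCQ]

theorem Refines.merge_right (hRQ : Refines R Q) : Refines R (mergeClusters Q A B) := by
  intro E hE
  obtain ⟨C, hC, hEC⟩ := hRQ E hE
  by_cases hCAB : C = A ∨ C = B
  · refine ⟨A ∪ B, mem_mergeClusters.2 (.inl rfl), ?_⟩
    rcases hCAB with rfl | rfl
    exacts [hEC.trans subset_union_left, hEC.trans subset_union_right]
  · push Not at hCAB
    exact ⟨C, mem_mergeClusters.2 (.inr ⟨hC, hCAB⟩), hEC⟩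

theorem exists_sameBlock_of_card_lt (hQR : Refines Q R) (hcard : #R < #Q) :
    ∃ C ∈ Q, ∃ C' ∈ Q, C ≠ C' ∧ SameBlock R C C' := by
  choose! f hfR hf using hQR
  obtain ⟨C, hC, C', hC', hne, heq⟩ := exists_ne_map_eq_of_card_lt_of_maps_to hcard hfR
  exact ⟨C, hC, C', hC', hne, f C, hfR C hC, union_subset (hf C hC) (heq ▸ hf C' hC')⟩

theorem IsPartition.eq_of_refines_of_card_le (hQ : IsPartition Q) (hR : IsPartition R)
    (hQR : Refines Q R) (hcard : #Q ≤ #R) : Q = R := by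
  choose! f hfR hf using hQR
  -- `f` is onto `R`, so `#Q ≤ #R` makes it injective, and then each block of `R` is one cluster
  have hblock : ∀ C ∈ Q, ∀ E ∈ R, ∀ x ∈ C, x ∈ E → f C = E := fun C hC E hE x hxC hxE =>
    hR.eq_of_mem (hfR C hC) hE (hf C hC hxC) hxE
  have himage : Q.image f = R := by
    refine Subset.antisymm (image_subset_iff.2 hfR) fun E hE => ?_
    obtain ⟨x, hx⟩ := hR.nonempty E hE
    obtain ⟨C, hC, hxC⟩ := hQ.cover x
    exact mem_image.2 ⟨C, hC, hblock C hC E hE x hxC hx⟩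
  have hinj : Set.InjOn f Q :=
    card_image_iff.1 (le_antisymm card_image_le (himage ▸ hcard))
  have hQsubR : Q ⊆ R := by
    intro C hC
    suffices f C ⊆ C from (hf C hC).antisymm this ▸ hfR C hC
    intro x hx
    obtain ⟨C', hC', hxC'⟩ := hQ.cover x
    rwa [← hinj hC' hC (hblock C' hC' _ (hfR C hC) x hxC' hx)]
  exact eq_of_subset_of_card_le hQsubR (himage ▸ card_image_le)

def Separated (R : Finset (Finset α)) (dtrue dfalse : ℝ) (Q : Finset (Finset α))
    (D : Finset α → Finset α → ℝ) : Prop :=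
  ∀ C ∈ Q, ∀ C' ∈ Q, C ≠ C' →
    (SameBlock R C C' → D C C' ≤ dtrue) ∧ (¬ SameBlock R C C' → dfalse ≤ D C C')

structure IsMergeStep (b : ℝ) (Q : Finset (Finset α)) (D : Finset α → Finset α → ℝ)
    (A B : Finset α) (D' : Finset α → Finset α → ℝ) : Prop where
  left_mem : A ∈ Q
  right_mem : B ∈ Q
  ne : A ≠ B
  isMin : ∀ C ∈ Q, ∀ C' ∈ Q, C ≠ C' → D A B ≤ D C C'
  dist_union : ∀ C ∈ Q, C ≠ A → C ≠ B →
    D' (A ∪ B) C = b * min (D A C) (D B C) + (1 - b) * max (D A C) (D B C) ∧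
    D' C (A ∪ B) = D' (A ∪ B) C
  dist_of_ne : ∀ C ∈ Q, ∀ C' ∈ Q, C ≠ A → C ≠ B → C' ≠ A → C' ≠ B → D' C C' = D C C'

variable {b dtrue dfalse : ℝ} {D D' : Finset α → Finset α → ℝ}

theorem Separated.sameBlock_of_isMergeStep (hsep : Separated R dtrue dfalse Q D)
    (hlt : dtrue < dfalse) (step : IsMergeStep b Q D A B D')
    (hpair : ∃ C ∈ Q, ∃ C' ∈ Q, C ≠ C' ∧ SameBlock R C C') : SameBlock R A B := by
  obtain ⟨C, hC, C', hC', hne, hCC'⟩ := hpair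
  by_contra hAB
  have hfar := (hsep A step.left_mem B step.right_mem step.ne).2 hAB
  have hnear := (hsep C hC C' hC' hne).1 hCC'
  linarith [step.isMin C hC C' hC' hne]

theorem Separated.merge (hR : IsPartition R) (hQ : IsPartition Q)
    (hsep : Separated R dtrue dfalse Q D) (step : IsMergeStep b Q D A B D')
    (hb0 : 0 ≤ b) (hb1 : b ≤ 1)
    (hcompat : SameBlock R A B ∨ ∀ C ∈ Q, ∀ C' ∈ Q, C ≠ C' → ¬ SameBlock R C C') :
    Separated R dtrue dfalse (mergeClusters Q A B) D' := by
  have hA := step.left_mem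
  have hB := step.right_mem
  have hunion : ∀ C ∈ Q, C ≠ A → C ≠ B →
      (SameBlock R (A ∪ B) C → D' (A ∪ B) C ≤ dtrue) ∧
      (¬ SameBlock R (A ∪ B) C → dfalse ≤ D' (A ∪ B) C) := by
    intro C hC hCA hCB
    rw [(step.dist_union C hC hCA hCB).1]
    constructor
    · rintro ⟨E, hE, hUE⟩
      rw [union_subset_iff, union_subset_iff] at hUE
      obtain ⟨⟨hAE, hBE⟩, hCE⟩ := hUE
      exact (linkage_le_max hb0 hb1 _ _).trans <| max_le
        ((hsep A hA C hC hCA.symm).1 ⟨E, hE, union_subset hAE hCE⟩)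
        ((hsep B hB C hC hCB.symm).1 ⟨E, hE, union_subset hBE hCE⟩)
    · intro hUC
      have hfar : ¬ SameBlock R A C ∧ ¬ SameBlock R B C := by
        rcases hcompat with hAB | hnone
        · refine ⟨fun hAC => hUC (hAB.union hR hAC (hQ.nonempty A hA)), fun hBC => hUC ?_⟩
          rw [union_comm]
          exact (sameBlock_comm.1 hAB).union hR hBC (hQ.nonempty B hB)
        · exact ⟨hnone A hA C hC hCA.symm, hnone B hB C hC hCB.symm⟩
      exact (le_min ((hsep A hA C hC hCA.symm).2 hfar.1)
        ((hsep B hB C hC hCB.symm).2 hfar.2)).trans (min_le_linkage hb0 hb1 _ _)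
  intro C hC C' hC' hne
  rcases mem_mergeClusters.1 hC with rfl | ⟨hCQ, hCA, hCB⟩ <;>
    rcases mem_mergeClusters.1 hC' with rfl | ⟨hC'Q, hC'A, hC'B⟩
  · exact absurd rfl hne
  · exact hunion C' hC'Q hC'A hC'B
  · rw [(step.dist_union C hCQ hCA hCB).2, sameBlock_comm]
    exact hunion C hCQ hCA hCB
  · rw [step.dist_of_ne C hCQ C' hC'Q hCA hCB hC'A hC'B]
    exact hsep C hCQ C' hC'Q hne

structure MergeInvariant (R : Finset (Finset α)) (dtrue dfalse : ℝ) (Q : Finset (Finset α))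
    (D : Finset α → Finset α → ℝ) : Prop where
  isPartition : IsPartition Q
  separated : Separated R dtrue dfalse Q D
  comparable : Refines Q R ∨ Refines R Q

theorem mergeInvariant_singletons [Fintype α] (hR : IsPartition R) {d : α → α → ℝ}
    (hdtrue : ∀ C ∈ R, ∀ i ∈ C, ∀ j ∈ C, i ≠ j → d i j ≤ dtrue)
    (hdfalse : ∀ C ∈ R, ∀ C' ∈ R, C ≠ C' → ∀ i ∈ C, ∀ j ∈ C', dfalse ≤ d i j)
    (hD : ∀ i j, D {i} {j} = d i j) :
    MergeInvariant R dtrue dfalse (univ.image fun i : α => ({i} : Finset α)) D := by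
  have hsame : ∀ i j, SameBlock R {i} {j} ↔ ∃ E ∈ R, i ∈ E ∧ j ∈ E := by
    simp only [SameBlock, union_subset_iff, singleton_subset_iff, implies_true]
  refine ⟨⟨?_, ?_, fun i => ⟨{i}, mem_image_of_mem _ (mem_univ i), mem_singleton_self i⟩⟩, ?_, ?_⟩
  · simp only [forall_mem_image, singleton_nonempty, implies_true]
  · simp only [forall_mem_image, mem_univ, ne_eq, singleton_inj, disjoint_singleton, imp_self,
      implies_true]
  · simp only [Separated, forall_mem_image, mem_univ, ne_eq, singleton_inj, hD, hsame, true_imp_iff]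
    intro i j hij
    refine ⟨fun ⟨E, hE, hi, hj⟩ => hdtrue E hE i hi j hj hij, fun hij' => ?_⟩
    obtain ⟨E, hE, hi⟩ := hR.cover i
    obtain ⟨E', hE', hj⟩ := hR.cover j
    exact hdfalse E hE E' hE' (by rintro rfl; exact hij' ⟨E, hE, hi, hj⟩) i hi j hj
  · exact .inl <| forall_mem_image.2 fun i _ =>
      let ⟨E, hE, hi⟩ := hR.cover i
      ⟨E, hE, singleton_subset_iff.2 hi⟩

theorem MergeInvariant.merge (hR : IsPartition R) (hinv : MergeInvariant R dtrue dfalse Q D)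
    (step : IsMergeStep b Q D A B D') (hb0 : 0 ≤ b) (hb1 : b ≤ 1) (hlt : dtrue < dfalse) :
    MergeInvariant R dtrue dfalse (mergeClusters Q A B) D' := by
  have hcompat : SameBlock R A B ∨ ∀ C ∈ Q, ∀ C' ∈ Q, C ≠ C' → ¬ SameBlock R C C' :=
    or_iff_not_imp_left.2 fun hAB C hC C' hC' hne hCC' =>
      hAB (hinv.separated.sameBlock_of_isMergeStep hlt step ⟨C, hC, C', hC', hne, hCC'⟩)
  refine ⟨hinv.isPartition.merge step.left_mem step.right_mem step.ne,
    hinv.separated.merge hR hinv.isPartition step hb0 hb1 hcompat, ?_⟩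
  rcases hinv.comparable with hfine | hcoarse
  · rcases hcompat with hAB | hnone
    · exact .inl (hfine.merge hAB)
    · have hcard : #Q ≤ #R := not_lt.1 fun hcard =>
        let ⟨C, hC, C', hC', hne, hCC'⟩ := exists_sameBlock_of_card_lt hfine hcard
        hnone C hC C' hC' hne hCC'
      obtain rfl := hinv.isPartition.eq_of_refines_of_card_le hR hfine hcard
      exact .inr (Refines.merge_right fun C hC => ⟨C, hC, subset_rfl⟩)
  · exact .inr hcoarse.merge_right

theorem MergeInvariant.eq_of_card_eq (hR : IsPartition R) (hinv : MergeInvariant R dtrue dfalse Q D)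
    (hcard : #Q = #R) : Q = R := by
  rcases hinv.comparable with hfine | hcoarse
  · exact hinv.isPartition.eq_of_refines_of_card_le hR hfine hcard.le
  · exact (hR.eq_of_refines_of_card_le hinv.isPartition hcoarse hcard.ge).symm

end AgglomerativeClustering

open AgglomerativeClustering

theorem stmt12_general (p T : ℕ) (hT : 0 < T) (hTp : T ≤ p)
    (d : Fin p → Fin p → ℝ)
    (b : ℝ) (hb0 : 0 ≤ b) (hb1 : b ≤ 1)
    (Pstar : Finset (Finset (Fin p)))
    (hPstar_card : Pstar.card = T)
    (hPstar_nonempty : ∀ C ∈ Pstar, C.Nonempty)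
    (hPstar_disjoint : ∀ C ∈ Pstar, ∀ C' ∈ Pstar, C ≠ C' → Disjoint C C')
    (hPstar_cover : ∀ i : Fin p, ∃ C ∈ Pstar, i ∈ C)
    (dtrue dfalse : ℝ)
    (hdtrue : ∀ C ∈ Pstar, ∀ i ∈ C, ∀ j ∈ C, i ≠ j → d i j ≤ dtrue)
    (hdfalse : ∀ C ∈ Pstar, ∀ C' ∈ Pstar, C ≠ C' → ∀ i ∈ C, ∀ j ∈ C', dfalse ≤ d i j)
    (hsep : dtrue < dfalse)
    -- the run of the agglomerative clustering algorithm: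
    (P : ℕ → Finset (Finset (Fin p)))
    (Dist : ℕ → Finset (Fin p) → Finset (Fin p) → ℝ)
    (C₁ C₂ : ℕ → Finset (Fin p)) (h : ℕ → ℝ)
    (hP0 : P 0 = Finset.univ.image (fun i : Fin p => ({i} : Finset (Fin p))))
    (hDist0 : ∀ i j : Fin p, Dist 0 {i} {j} = d i j)
    (hstep : ∀ s : ℕ, s + 1 < p →
      C₁ s ∈ P s ∧ C₂ s ∈ P s ∧ C₁ s ≠ C₂ s ∧
      (∀ C ∈ P s, ∀ C' ∈ P s, C ≠ C' → Dist s (C₁ s) (C₂ s) ≤ Dist s C C') ∧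
      h s = Dist s (C₁ s) (C₂ s) ∧
      P (s + 1) = insert (C₁ s ∪ C₂ s) (((P s).erase (C₁ s)).erase (C₂ s)) ∧
      (∀ C ∈ P s, C ≠ C₁ s → C ≠ C₂ s →
        Dist (s + 1) (C₁ s ∪ C₂ s) C =
          b * min (Dist s (C₁ s) C) (Dist s (C₂ s) C)
          + (1 - b) * max (Dist s (C₁ s) C) (Dist s (C₂ s) C) ∧
        Dist (s + 1) C (C₁ s ∪ C₂ s) = Dist (s + 1) (C₁ s ∪ C₂ s) C) ∧
      (∀ C ∈ P s, ∀ C' ∈ P s, C ≠ C₁ s → C ≠ C₂ s → C' ≠ C₁ s → C' ≠ C₂ s →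
        Dist (s + 1) C C' = Dist s C C')) :
    (∀ s : ℕ, s + 1 < p → (∃ C ∈ Pstar, C₁ s ∪ C₂ s ⊆ C) → h s ≤ dtrue) ∧
    (∀ s : ℕ, s + 1 < p → (∀ C ∈ Pstar, ¬ (C₁ s ∪ C₂ s ⊆ C)) → dfalse ≤ h s) ∧
    P (p - T) = Pstar := by
  have hR : IsPartition Pstar := ⟨hPstar_nonempty, hPstar_disjoint, hPstar_cover⟩
  have hrun : ∀ s < p,
      MergeInvariant Pstar dtrue dfalse (P s) (Dist s) ∧ (P s).card + s = p := by
    intro s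
    induction s with
    | zero =>
      intro _
      rw [hP0, Finset.card_image_of_injective _ Finset.singleton_injective]
      exact ⟨mergeInvariant_singletons hR hdtrue hdfalse hDist0, by simp⟩
    | succ s ih =>
      intro hs
      obtain ⟨hinv, hcard⟩ := ih (by omega)
      obtain ⟨hA, hB, hAB, hmin, -, hPs, hunion, hkeep⟩ := hstep s hs
      have step : IsMergeStep b (P s) (Dist s) (C₁ s) (C₂ s) (Dist (s + 1)) :=
        ⟨hA, hB, hAB, hmin, hunion, hkeep⟩
      have hPs' : P (s + 1) = mergeClusters (P s) (C₁ s) (C₂ s) := hPs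
      have hcard' := hinv.isPartition.card_merge hA hB hAB
      rw [hPs']
      exact ⟨hinv.merge hR step hb0 hb1 hsep, by omega⟩
  refine ⟨fun s hs hin => ?_, fun s hs hout => ?_, ?_⟩
  · obtain ⟨hA, hB, hAB, -, hh, -⟩ := hstep s hs
    exact hh ▸ ((hrun s (by omega)).1.separated _ hA _ hB hAB).1 hin
  · obtain ⟨hA, hB, hAB, -, hh, -⟩ := hstep s hs
    exact hh ▸ ((hrun s (by omega)).1.separated _ hA _ hB hAB).2 fun ⟨E, hE, hsub⟩ => hout E hE hsub
  · obtain ⟨hinv, hcard⟩ := hrun (p - T) (by omega)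
    exact hinv.eq_of_card_eq hR (by omega)

/-- if the dissimilarity matrix separates the true partition
(dᵗʳᵘᵉ < dᶠᵃˡˢᵉ), then under any convex-combination linkage every merge compatible
with the true partition occurs at height ≤ dᵗʳᵘᵉ, every incompatible merge at
height ≥ dᶠᵃˡˢᵉ, and after p − T merges the current partition is the true one. -/
theorem stmt12 (p T : ℕ) (hT : 0 < T) (hTp : T ≤ p)
    (d : Fin p → Fin p → ℝ) (hdsym : ∀ i j, d i j = d j i)
    (b : ℝ) (hb0 : 0 ≤ b) (hb1 : b ≤ 1)
    (Pstar : Finset (Finset (Fin p)))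
    (hPstar_card : Pstar.card = T)
    (hPstar_nonempty : ∀ C ∈ Pstar, C.Nonempty)
    (hPstar_disjoint : ∀ C ∈ Pstar, ∀ C' ∈ Pstar, C ≠ C' → Disjoint C C')
    (hPstar_cover : ∀ i : Fin p, ∃ C ∈ Pstar, i ∈ C)
    (dtrue dfalse : ℝ)
    (hdtrue : ∀ C ∈ Pstar, ∀ i ∈ C, ∀ j ∈ C, i ≠ j → d i j ≤ dtrue)
    (hdfalse : ∀ C ∈ Pstar, ∀ C' ∈ Pstar, C ≠ C' → ∀ i ∈ C, ∀ j ∈ C', dfalse ≤ d i j)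
    (hsep : dtrue < dfalse)
    -- the run of the agglomerative clustering algorithm:
    (P : ℕ → Finset (Finset (Fin p)))
    (Dist : ℕ → Finset (Fin p) → Finset (Fin p) → ℝ)
    (C₁ C₂ : ℕ → Finset (Fin p)) (h : ℕ → ℝ)
    (hP0 : P 0 = Finset.univ.image (fun i : Fin p => ({i} : Finset (Fin p))))
    (hDist0 : ∀ i j : Fin p, Dist 0 {i} {j} = d i j)
    (hstep : ∀ s : ℕ, s + 1 < p →
      C₁ s ∈ P s ∧ C₂ s ∈ P s ∧ C₁ s ≠ C₂ s ∧
      (∀ C ∈ P s, ∀ C' ∈ P s, C ≠ C' → Dist s (C₁ s) (C₂ s) ≤ Dist s C C') ∧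
      h s = Dist s (C₁ s) (C₂ s) ∧
      P (s + 1) = insert (C₁ s ∪ C₂ s) (((P s).erase (C₁ s)).erase (C₂ s)) ∧
      (∀ C ∈ P s, C ≠ C₁ s → C ≠ C₂ s →
        Dist (s + 1) (C₁ s ∪ C₂ s) C =
          b * min (Dist s (C₁ s) C) (Dist s (C₂ s) C)
          + (1 - b) * max (Dist s (C₁ s) C) (Dist s (C₂ s) C) ∧
        Dist (s + 1) C (C₁ s ∪ C₂ s) = Dist (s + 1) (C₁ s ∪ C₂ s) C) ∧
      (∀ C ∈ P s, ∀ C' ∈ P s, C ≠ C₁ s → C ≠ C₂ s → C' ≠ C₁ s → C' ≠ C₂ s →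
        Dist (s + 1) C C' = Dist s C C')) :
    (∀ s : ℕ, s + 1 < p → (∃ C ∈ Pstar, C₁ s ∪ C₂ s ⊆ C) → h s ≤ dtrue) ∧
    (∀ s : ℕ, s + 1 < p → (∀ C ∈ Pstar, ¬ (C₁ s ∪ C₂ s ⊆ C)) → dfalse ≤ h s) ∧
    P (p - T) = Pstar :=
  stmt12_general p T hT hTp d b hb0 hb1 Pstar hPstar_card hPstar_nonempty hPstar_disjoint
    hPstar_cover dtrue dfalse hdtrue hdfalse hsep P Dist C₁ C₂ h hP0 hDist0 hstep
end
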